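/- arXiv:2102.08106 — 8 statements merged into one kernel-verified Lean document; each statement's English description precedes it below -/
import Mathlib

section
/- If A is T-normal, then A is T-EP, i.e., range(A) = range(T A* T) and A = A T* T. -/
open Matrix

/-- The four Penrose conditions: `X` is the Moore-Penrose inverse of `A`. -/
def IsMP {m n : ℕ} (A : Matrix (Fin m) (Fin n) ℂ) (X : Matrix (Fin n) (Fin m) ℂ) : Prop :=
  A * X * A = A ∧ X * A * X = X ∧ (A * X)ᴴ = A * X ∧ (X * A)ᴴ = X * A

/-- `A` is T-EP: range(A) = range(T Aᴴ T) and A = A Tᴴ T. -/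
def IsTEP {m n : ℕ} (T A : Matrix (Fin m) (Fin n) ℂ) : Prop :=
  LinearMap.range (Matrix.mulVecLin A) = LinearMap.range (Matrix.mulVecLin (T * Aᴴ * T)) ∧
    A = A * Tᴴ * T

/-!
Since `range (M Mᴴ) = range M`, it suffices that `B = T Aᴴ T` satisfies `B Bᴴ = A Aᴴ`; indeed
`B Bᴴ = T Aᴴ (T Tᴴ A) Tᴴ = T Aᴴ A Tᴴ = A Aᴴ T Tᴴ = A (T Tᴴ A)ᴴ = A Aᴴ`.
-/

section

variable {m n R : Type*} [Fintype m] [Fintype n]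

theorem Matrix.range_mulVecLin_self_mul_conjTranspose [Field R] [PartialOrder R] [StarRing R]
    [StarOrderedRing R] (M : Matrix m n R) :
    LinearMap.range (M * Mᴴ).mulVecLin = LinearMap.range M.mulVecLin := by
  refine Submodule.eq_of_le_of_finrank_le ?_ (rank_self_mul_conjTranspose M).ge
  rw [mulVecLin_mul]
  exact LinearMap.range_comp_le_range _ _

theorem Matrix.mul_conjTranspose_eq_self_mul_conjTranspose [CommRing R] [StarRing R]
    {A T : Matrix m n R} (hleft : A = T * Tᴴ * A) (hcomm : A * Aᴴ * T = T * Aᴴ * A) :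
    (T * Aᴴ * T) * (T * Aᴴ * T)ᴴ = A * Aᴴ := by
  have hleft' : Aᴴ = Aᴴ * T * Tᴴ := by
    simpa [conjTranspose_mul, Matrix.mul_assoc] using congrArg conjTranspose hleft
  calc (T * Aᴴ * T) * (T * Aᴴ * T)ᴴ = T * Aᴴ * (T * Tᴴ * A) * Tᴴ := by
        simp only [conjTranspose_mul, conjTranspose_conjTranspose, Matrix.mul_assoc]
    _ = (T * Aᴴ * A) * Tᴴ := by rw [← hleft]
    _ = A * (Aᴴ * T * Tᴴ) := by rw [← hcomm]; simp only [Matrix.mul_assoc]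
    _ = A * Aᴴ := by rw [← hleft']

end

theorem stmt1_general {m n : ℕ} (A T : Matrix (Fin m) (Fin n) ℂ)
    (hnorm : A = T * Tᴴ * A ∧ A = A * Tᴴ * T ∧ A * Aᴴ * T = T * Aᴴ * A) :
    IsTEP T A := by
  obtain ⟨hleft, hright, hcomm⟩ := hnorm
  refine ⟨?_, hright⟩
  open scoped ComplexOrder in
  rw [← range_mulVecLin_self_mul_conjTranspose A,
    ← mul_conjTranspose_eq_self_mul_conjTranspose hleft hcomm,
    range_mulVecLin_self_mul_conjTranspose]

theorem stmt1 {m n : ℕ} (A T : Matrix (Fin m) (Fin n) ℂ)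
    (hT : T = T * Tᴴ * T)
    (hnorm : A = T * Tᴴ * A ∧ A = A * Tᴴ * T ∧ A * Aᴴ * T = T * Aᴴ * A) :
    IsTEP T A :=
  stmt1_general A T hnorm
end

section
/- If A is a T-EP matrix, then A = T T* A. -/
open Matrix

namespace Matrix

variable {R : Type*} [CommSemiring R] {l m n : Type*} [Fintype m] [Fintype n]

theorem range_mulVecLin_mul_le (M : Matrix l m R) (N : Matrix m n R) :
    LinearMap.range (M * N).mulVecLin ≤ LinearMap.range M.mulVecLin := by
  rw [mulVecLin_mul]
  exact LinearMap.range_comp_le_range _ _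

theorem mul_eq_self_of_range_le [Fintype l] {P : Matrix l l R} {A : Matrix l n R}
    {B : Matrix l m R} (hB : P * B = B)
    (hAB : LinearMap.range A.mulVecLin ≤ LinearMap.range B.mulVecLin) : P * A = A := by
  refine ext_iff_mulVec.2 fun v => ?_
  obtain ⟨w, hw : B *ᵥ w = A *ᵥ v⟩ := hAB ⟨v, rfl⟩
  rw [← mulVec_mulVec, ← hw, mulVec_mulVec, hB]

end Matrix

theorem stmt5 {m n : ℕ} (A T : Matrix (Fin m) (Fin n) ℂ)
    (hT : T = T * Tᴴ * T) (hTEP : IsTEP T A) :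
    A = T * Tᴴ * A := by
  have hrange : LinearMap.range A.mulVecLin ≤ LinearMap.range T.mulVecLin := by
    rw [hTEP.1, Matrix.mul_assoc]
    exact range_mulVecLin_mul_le T (Aᴴ * T)
  exact (mul_eq_self_of_range_le hT.symm hrange).symm
end

section
/- If A is a T-EP matrix, then (A T*)† = T A† and (T* A T*)† = T A† T. -/
open Matrix

/-!
Since `A = A Tᴴ T`, the factor `Tᴴ T` can be absorbed on the right of `A`, and since
`range A = range (T Aᴴ T) ⊆ range T` while `T Tᴴ` fixes `range T` (as `T = T Tᴴ T`), also
`A = T Tᴴ A`. With these two absorption rules each Penrose equation for `A * Tᴴ` and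
`Tᴴ * A * Tᴴ` collapses to the corresponding one for `A` and `A†`.
-/

theorem Matrix.mul_eq_self_of_range_mulVecLin_le {l m n R : Type*} [CommSemiring R]
    [Fintype l] [Fintype m] [Fintype n] {P : Matrix m m R} {A : Matrix m n R} {B : Matrix m l R}
    (hPB : P * B = B) (h : LinearMap.range A.mulVecLin ≤ LinearMap.range B.mulVecLin) :
    P * A = A := by
  refine ext_iff_mulVec.2 fun v => ?_
  obtain ⟨w, hw⟩ := h ⟨v, rfl⟩
  rw [← mulVec_mulVec, ← mulVecLin_apply A, ← hw, mulVecLin_apply, mulVec_mulVec, hPB]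

namespace IsMP

variable {m n k : ℕ} {A : Matrix (Fin m) (Fin n) ℂ} {X : Matrix (Fin n) (Fin m) ℂ}

theorem mul_conjTranspose_right (hA : IsMP A X) {S : Matrix (Fin k) (Fin n) ℂ}
    (hS : A * Sᴴ * S = A) : IsMP (A * Sᴴ) (S * X) := by
  obtain ⟨h1, h2, h3, h4⟩ := hA
  have hAX : A * Sᴴ * (S * X) = A * X := by rw [← Matrix.mul_assoc, hS]
  refine ⟨?_, ?_, by rw [hAX, h3], ?_⟩
  · rw [hAX, ← Matrix.mul_assoc, h1]
  · rw [Matrix.mul_assoc (S * X), hAX, Matrix.mul_assoc S, ← Matrix.mul_assoc X, h2]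
  · have hXA : S * X * (A * Sᴴ) = S * (X * A) * Sᴴ := by simp only [Matrix.mul_assoc]
    exact hXA ▸ isHermitian_mul_mul_conjTranspose S h4

theorem conjTranspose_mul_left (hA : IsMP A X) {R : Matrix (Fin m) (Fin k) ℂ}
    (hR : R * Rᴴ * A = A) : IsMP (Rᴴ * A) (X * R) := by
  obtain ⟨h1, h2, h3, h4⟩ := hA
  have hXA : X * R * (Rᴴ * A) = X * A := by
    rw [Matrix.mul_assoc, ← Matrix.mul_assoc R, hR]
  refine ⟨?_, ?_, ?_, by rw [hXA, h4]⟩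
  · rw [Matrix.mul_assoc, hXA, Matrix.mul_assoc, ← Matrix.mul_assoc A, h1]
  · rw [hXA, ← Matrix.mul_assoc, h2]
  · have hAX : Rᴴ * A * (X * R) = Rᴴ * (A * X) * R := by simp only [Matrix.mul_assoc]
    exact hAX ▸ isHermitian_conjTranspose_mul_mul R h3

end IsMP

theorem stmt8 {m n : ℕ} (A T : Matrix (Fin m) (Fin n) ℂ)
    (Ad : Matrix (Fin n) (Fin m) ℂ) (hT : T = T * Tᴴ * T) (hMP : IsMP A Ad)
    (hTEP : IsTEP T A) :
    IsMP (A * Tᴴ) (T * Ad) ∧ IsMP (Tᴴ * A * Tᴴ) (T * Ad * T) := by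
  obtain ⟨hrange, hA⟩ := hTEP
  have hATT : T * Tᴴ * A = A := by
    refine mul_eq_self_of_range_mulVecLin_le (B := T * (Aᴴ * T)) ?_ ?_
    · rw [← Matrix.mul_assoc, ← hT]
    · rw [hrange, Matrix.mul_assoc]
  have hright : IsMP (A * Tᴴ) (T * Ad) := hMP.mul_conjTranspose_right hA.symm
  refine ⟨hright, ?_⟩
  rw [Matrix.mul_assoc Tᴴ]
  exact hright.conjTranspose_mul_left (by rw [← Matrix.mul_assoc, hATT])
end

section
/- An m×n complex matrix A is T-EP if and only if there exists an m×m EP matrix E such that A = E T and T T* E = E. -/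
open Matrix

/-!
With `P = T Tᴴ`, the orthogonal projection onto `range T`, both directions rest on two facts:
a matrix whose range lies in `range P` is fixed by `P`, and `range (M * N) = range M` as soon
as `M` also factors through `M * N`.
For `A` T-EP the witness is `E = A Tᴴ`; conversely, an EP matrix `E = P E` also satisfies
`E = E P`, since `range Eᴴ = range E ≤ range P`.
-/

namespace Matrix

section Range

variable {R : Type*} [CommSemiring R] {l m n : Type*} [Fintype m] [Fintype n]

theorem range_mulVecLin_eq_of_eq_mul {M : Matrix l m R} {N : Matrix l n R}
    {X : Matrix n m R} {Y : Matrix m n R} (hM : M = N * X) (hN : N = M * Y) :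
    LinearMap.range M.mulVecLin = LinearMap.range N.mulVecLin :=
  le_antisymm (hM ▸ range_mulVecLin_mul_le N X) (hN ▸ range_mulVecLin_mul_le M Y)

theorem mul_eq_self_of_range_mulVecLin_le_s9 {P : Matrix m m R} {M : Matrix m n R}
    (hP : IsIdempotentElem P) (h : LinearMap.range M.mulVecLin ≤ LinearMap.range P.mulVecLin) :
    P * M = M := by
  refine ext_iff_mulVec.mpr fun v => ?_
  obtain ⟨w, hw⟩ := h ⟨v, rfl⟩
  simp only [mulVecLin_apply] at hw
  rw [← mulVec_mulVec, ← hw, mulVec_mulVec, hP.eq]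

end Range

section PartialIsometry

variable {R : Type*} [CommSemiring R] [StarRing R] {m n : Type*} [Fintype m] [Fintype n]
  {T : Matrix m n R}

theorem isIdempotentElem_mul_conjTranspose_self (hT : T = T * Tᴴ * T) :
    IsIdempotentElem (T * Tᴴ) := by
  rw [IsIdempotentElem, ← Matrix.mul_assoc, ← hT]

theorem conjTranspose_mul_mul_conjTranspose_self {k : Type*} {M : Matrix m k R}
    (h : T * Tᴴ * M = M) : Mᴴ * (T * Tᴴ) = Mᴴ := by
  simpa [Matrix.mul_assoc] using congrArg conjTranspose h

end PartialIsometry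

end Matrix

section TEP

variable {m n : ℕ} {A T : Matrix (Fin m) (Fin n) ℂ}

theorem IsTEP.mul_conjTranspose_self_mul (hT : T = T * Tᴴ * T) (h : IsTEP T A) :
    T * Tᴴ * A = A := by
  refine mul_eq_self_of_range_mulVecLin_le_s9 (isIdempotentElem_mul_conjTranspose_self hT) ?_
  have hTAT : T * Tᴴ * (T * Aᴴ * T) = T * Aᴴ * T := by
    simp only [← Matrix.mul_assoc, ← hT]
  rw [h.1, ← hTAT]
  exact range_mulVecLin_mul_le _ _

theorem IsTEP.exists_ep_mul (hT : T = T * Tᴴ * T) (h : IsTEP T A) :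
    ∃ E : Matrix (Fin m) (Fin m) ℂ,
      LinearMap.range E.mulVecLin = LinearMap.range Eᴴ.mulVecLin ∧
        A = E * T ∧ T * Tᴴ * E = E := by
  have hPA := h.mul_conjTranspose_self_mul hT
  have hAP := conjTranspose_mul_mul_conjTranspose_self hPA
  refine ⟨A * Tᴴ, ?_, h.2, by rw [← Matrix.mul_assoc, hPA]⟩
  rw [conjTranspose_mul, conjTranspose_conjTranspose]
  calc LinearMap.range (A * Tᴴ).mulVecLin
      = LinearMap.range A.mulVecLin := range_mulVecLin_eq_of_eq_mul rfl h.2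
    _ = LinearMap.range (T * Aᴴ * T).mulVecLin := h.1
    _ = LinearMap.range (T * Aᴴ).mulVecLin :=
      range_mulVecLin_eq_of_eq_mul rfl (by rw [Matrix.mul_assoc _ T, Matrix.mul_assoc T, hAP])

theorem isTEP_of_eq_mul {E : Matrix (Fin m) (Fin m) ℂ} (hT : T = T * Tᴴ * T)
    (hE : LinearMap.range E.mulVecLin = LinearMap.range Eᴴ.mulVecLin)
    (hA : A = E * T) (hPE : T * Tᴴ * E = E) : IsTEP T A := by
  have hPEH : T * Tᴴ * Eᴴ = Eᴴ := by
    refine mul_eq_self_of_range_mulVecLin_le_s9 (isIdempotentElem_mul_conjTranspose_self hT) ?_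
    rw [← hE, ← hPE]
    exact range_mulVecLin_mul_le _ _
  have hEP : E * (T * Tᴴ) = E := by
    simpa using conjTranspose_mul_mul_conjTranspose_self hPEH
  have hEHP := conjTranspose_mul_mul_conjTranspose_self hPE
  have hTAT : T * Aᴴ * T = Eᴴ * T := by
    rw [hA, conjTranspose_mul, ← Matrix.mul_assoc T, hPEH]
  constructor
  · calc LinearMap.range A.mulVecLin
        = LinearMap.range E.mulVecLin :=
          range_mulVecLin_eq_of_eq_mul hA (by rw [hA, Matrix.mul_assoc, hEP])
      _ = LinearMap.range Eᴴ.mulVecLin := hE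
      _ = LinearMap.range (T * Aᴴ * T).mulVecLin := by
          rw [hTAT]
          exact range_mulVecLin_eq_of_eq_mul (by rw [Matrix.mul_assoc, hEHP]) rfl
  · rw [hA, Matrix.mul_assoc E, Matrix.mul_assoc E, ← hT]

end TEP

theorem stmt9 {m n : ℕ} (A T : Matrix (Fin m) (Fin n) ℂ)
    (hT : T = T * Tᴴ * T) :
    IsTEP T A ↔
      ∃ E : Matrix (Fin m) (Fin m) ℂ,
        LinearMap.range (Matrix.mulVecLin E) = LinearMap.range (Matrix.mulVecLin Eᴴ) ∧
        A = E * T ∧ T * Tᴴ * E = E :=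
  ⟨fun h => h.exists_ep_mul hT, fun ⟨_, hE, hA, hPE⟩ => isTEP_of_eq_mul hT hE hA hPE⟩
end

section
/- If A is T-EP, with E an EP matrix satisfying A = E T and T T* E = E, then the Moore-Penrose inverse of A is A† = T* E†. -/
/-
Since `E` is EP, the columns of `Eᴴ` lie in the range of `E`, so `E E† Eᴴ = Eᴴ`; hence the
projection `T Tᴴ`, which fixes `E`, also fixes `Eᴴ`, and therefore `E† = Eᴴ (E†)ᴴ E†`.
With `T Tᴴ E† = E†` the four Penrose equations for `A = E T` and `Tᴴ E†` reduce to those of `E`.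
-/

open Matrix

section Range

variable {l m n R : Type*} [Fintype l] [Fintype m] [Fintype n] [CommSemiring R]

theorem Matrix.mul_mul_eq_of_range_le {A : Matrix l m R} {X : Matrix m l R}
    {B : Matrix l n R} (hAXA : A * X * A = A)
    (hB : LinearMap.range B.mulVecLin ≤ LinearMap.range A.mulVecLin) : A * X * B = B := by
  refine Matrix.ext_iff_mulVec.mpr fun v => ?_
  obtain ⟨u, hu⟩ := hB ⟨v, rfl⟩
  change A *ᵥ u = B *ᵥ v at hu
  rw [← Matrix.mulVec_mulVec, ← hu, Matrix.mulVec_mulVec, hAXA]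

end Range

section Penrose

variable {m n R : Type*} [Fintype m] [Fintype n] [CommSemiring R] [StarRing R]

theorem Matrix.eq_conjTranspose_mul_of_penrose {A : Matrix m n R} {X : Matrix n m R}
    (hXAX : X * A * X = X) (hXA : (X * A)ᴴ = X * A) : X = Aᴴ * Xᴴ * X := by
  conv_lhs => rw [← hXAX, ← hXA, conjTranspose_mul]

end Penrose

namespace IsMP

variable {m n : ℕ}

theorem mul_conjTranspose_eq_conjTranspose {E Ed : Matrix (Fin m) (Fin m) ℂ} (hEd : IsMP E Ed)
    (hE : LinearMap.range E.mulVecLin = LinearMap.range Eᴴ.mulVecLin) : E * Ed * Eᴴ = Eᴴ :=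
  Matrix.mul_mul_eq_of_range_le hEd.1 hE.ge

theorem mul_eq_self_of_mul_eq_self {E Ed P : Matrix (Fin m) (Fin m) ℂ} (hEd : IsMP E Ed)
    (hE : LinearMap.range E.mulVecLin = LinearMap.range Eᴴ.mulVecLin) (hPE : P * E = E) :
    P * Ed = Ed := by
  have hPEH : P * Eᴴ = Eᴴ := by
    rw [← hEd.mul_conjTranspose_eq_conjTranspose hE, ← Matrix.mul_assoc, ← Matrix.mul_assoc,
      hPE]
  have hEd_eq := Matrix.eq_conjTranspose_mul_of_penrose hEd.2.1 hEd.2.2.2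
  rw [hEd_eq, Matrix.mul_assoc, ← Matrix.mul_assoc P, hPEH]

theorem mul_right {E Ed : Matrix (Fin m) (Fin m) ℂ} {T : Matrix (Fin m) (Fin n) ℂ}
    (hEd : IsMP E Ed) (hTEd : T * Tᴴ * Ed = Ed) : IsMP (E * T) (Tᴴ * Ed) := by
  obtain ⟨h1, h2, h3, h4⟩ := hEd
  have hAX : E * T * (Tᴴ * Ed) = E * Ed := by
    rw [Matrix.mul_assoc, ← Matrix.mul_assoc T, hTEd]
  refine ⟨?_, ?_, ?_, ?_⟩
  · rw [hAX, ← Matrix.mul_assoc, h1]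
  · rw [Matrix.mul_assoc, hAX, ← Matrix.mul_assoc, Matrix.mul_assoc Tᴴ, Matrix.mul_assoc Tᴴ, h2]
  · rw [hAX, h3]
  · have hXA : Tᴴ * Ed * (E * T) = Tᴴ * (Ed * E) * T := by simp only [Matrix.mul_assoc]
    rw [hXA, conjTranspose_mul, conjTranspose_mul, conjTranspose_conjTranspose, h4]
    simp only [Matrix.mul_assoc]

end IsMP

theorem stmt10_general {m n : ℕ} (A T : Matrix (Fin m) (Fin n) ℂ)
    (E : Matrix (Fin m) (Fin m) ℂ) (Ed : Matrix (Fin m) (Fin m) ℂ)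
    (hE : LinearMap.range (Matrix.mulVecLin E) = LinearMap.range (Matrix.mulVecLin Eᴴ))
    (hA : A = E * T) (hTE : T * Tᴴ * E = E) (hEd : IsMP E Ed) :
    IsMP A (Tᴴ * Ed) :=
  hA ▸ hEd.mul_right (hEd.mul_eq_self_of_mul_eq_self hE hTE)

theorem stmt10 {m n : ℕ} (A T : Matrix (Fin m) (Fin n) ℂ)
    (E : Matrix (Fin m) (Fin m) ℂ) (Ed : Matrix (Fin m) (Fin m) ℂ)
    (hT : T = T * Tᴴ * T) (hTEP : IsTEP T A)
    (hE : LinearMap.range (Matrix.mulVecLin E) = LinearMap.range (Matrix.mulVecLin Eᴴ))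
    (hA : A = E * T) (hTE : T * Tᴴ * E = E) (hEd : IsMP E Ed) :
    IsMP A (Tᴴ * Ed) :=
  stmt10_general A T E Ed hE hA hTE hEd
end

section
/- An m×n complex matrix A is T-EP if and only if T A† A = A A† T and A = A T* T. -/
/-!
Write `P = A A†` and `Q = A† A` and assume `A = A T* T`. Then `Q T* T = Q`, so `E = T Q T*` is an
orthogonal projection with `tr E = tr Q = tr P`; hence `P = E` as soon as `P E = E`. The
commutation `T Q = P T` gives `P E = T Q² T* = E`, and conversely `P = E` gives
`T Q = T Q T* T = E T = P T`. The range condition forces `T T* A = A` (as `T T* T = T`), whence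
`P T A* = T A*` and `P E = E`; conversely, from `P = E` one reads off the factorizations
`A = T A* T (Q T* A†* T* A)` and `T A* T = A (A† T A* T)`.
-/

open Matrix

namespace Matrix

variable {R : Type*} [CommSemiring R] {l m n : Type*} [Fintype m] [Fintype n] [DecidableEq n]

theorem range_mulVecLin_le_iff_exists_mul (M : Matrix l n R) (A : Matrix l m R) :
    LinearMap.range M.mulVecLin ≤ LinearMap.range A.mulVecLin ↔
      ∃ X : Matrix m n R, M = A * X := by
  refine ⟨fun h ↦ ?_, ?_⟩
  · choose x hx using fun j ↦ h ⟨Pi.single j 1, rfl⟩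
    refine ⟨of fun i j ↦ x j i, ?_⟩
    ext i j
    have := congrFun (hx j) i
    simp only [mulVecLin_apply, mulVec_single_one] at this
    rw [← col_apply M j i, ← this]
    rfl
  · rintro ⟨X, rfl⟩
    rw [mulVecLin_mul]
    exact LinearMap.range_comp_le_range _ _

end Matrix

namespace IsStarProjection

section trace

variable {R : Type*} [Ring R] [PartialOrder R] [StarRing R] [StarOrderedRing R]
  [NoZeroDivisors R] {n : Type*} [Fintype n] {p q : Matrix n n R}

theorem eq_zero_of_trace_eq_zero (hp : IsStarProjection p) (h : p.trace = 0) : p = 0 := by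
  have hp' : pᴴ * p = p := by
    rw [← star_eq_conjTranspose, hp.isSelfAdjoint.star_eq, hp.isIdempotentElem.eq]
  rwa [← hp', trace_conjTranspose_mul_self_eq_zero_iff] at h

theorem eq_of_mul_eq_of_trace_eq (hq : IsStarProjection q) (hp : IsStarProjection p)
    (hqp : q * p = p) (htr : q.trace = p.trace) : q = p :=
  sub_eq_zero.mp <| (hp.sub_of_mul_eq_right hq hqp).eq_zero_of_trace_eq_zero <| by
    rw [trace_sub, htr, sub_self]

end trace

variable {R : Type*} [CommSemiring R] [StarRing R] {m n : Type*} [Fintype m] [Fintype n]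

theorem mul_mul_conjTranspose {Q : Matrix n n R} (hQ : IsStarProjection Q) (T : Matrix m n R)
    (h : Q * (Tᴴ * T) = Q) : IsStarProjection (T * Q * Tᴴ) where
  isIdempotentElem := by
    change T * Q * Tᴴ * (T * Q * Tᴴ) = T * Q * Tᴴ
    rw [show T * Q * Tᴴ * (T * Q * Tᴴ) = T * (Q * (Tᴴ * T) * Q) * Tᴴ by
      simp only [Matrix.mul_assoc], h, hQ.isIdempotentElem.eq]
  isSelfAdjoint := by
    rw [IsSelfAdjoint, star_eq_conjTranspose, conjTranspose_mul, conjTranspose_mul,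
      conjTranspose_conjTranspose, ← star_eq_conjTranspose Q, hQ.isSelfAdjoint.star_eq,
      Matrix.mul_assoc]

end IsStarProjection

namespace IsMP

open scoped ComplexOrder

variable {m n : ℕ} {A T : Matrix (Fin m) (Fin n) ℂ} {Ad : Matrix (Fin n) (Fin m) ℂ}

theorem isStarProjection_mul_pinv (h : IsMP A Ad) : IsStarProjection (A * Ad) where
  isIdempotentElem := by
    change A * Ad * (A * Ad) = A * Ad
    rw [← Matrix.mul_assoc, h.1]
  isSelfAdjoint := h.2.2.1

theorem isStarProjection_pinv_mul (h : IsMP A Ad) : IsStarProjection (Ad * A) where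
  isIdempotentElem := by
    change Ad * A * (Ad * A) = Ad * A
    rw [← Matrix.mul_assoc, h.2.1]
  isSelfAdjoint := h.2.2.2

theorem pinv_mul_mul_conjTranspose (h : IsMP A Ad) : Ad * A * Aᴴ = Aᴴ := by
  conv_rhs => rw [← h.1, Matrix.mul_assoc, conjTranspose_mul, h.2.2.2]

theorem mul_pinv_mul_conjTranspose_pinv (h : IsMP A Ad) : A * Ad * Adᴴ = Adᴴ := by
  conv_rhs => rw [← h.2.1, Matrix.mul_assoc, conjTranspose_mul, h.2.2.1]

theorem conjTranspose_mul_conjTranspose_pinv (h : IsMP A Ad) : Aᴴ * Adᴴ = Ad * A := by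
  rw [← conjTranspose_mul, h.2.2.2]

theorem mul_pinv_eq_conj_of_mul_eq (h : IsMP A Ad) (hA : A = A * Tᴴ * T)
    (hE : A * Ad * (T * (Ad * A) * Tᴴ) = T * (Ad * A) * Tᴴ) :
    A * Ad = T * (Ad * A) * Tᴴ := by
  have hQ : Ad * A * (Tᴴ * T) = Ad * A := by
    rw [Matrix.mul_assoc Ad, ← Matrix.mul_assoc A, ← hA]
  refine h.isStarProjection_mul_pinv.eq_of_mul_eq_of_trace_eq
    (h.isStarProjection_pinv_mul.mul_mul_conjTranspose T hQ) hE ?_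
  rw [trace_mul_comm A, Matrix.mul_assoc, trace_mul_comm T, Matrix.mul_assoc, hQ]

theorem mul_pinv_eq_conj_iff (h : IsMP A Ad) (hA : A = A * Tᴴ * T) :
    A * Ad = T * (Ad * A) * Tᴴ ↔ T * Ad * A = A * Ad * T := by
  refine ⟨fun hE ↦ ?_, fun hc ↦ h.mul_pinv_eq_conj_of_mul_eq hA ?_⟩
  · calc T * Ad * A = T * Ad * (A * Tᴴ * T) := by rw [← hA]
      _ = A * Ad * T := by rw [hE]; simp only [Matrix.mul_assoc]
  · calc A * Ad * (T * (Ad * A) * Tᴴ) = T * Ad * A * (Ad * A) * Tᴴ := by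
          rw [hc]; simp only [Matrix.mul_assoc]
      _ = T * (Ad * A) * Tᴴ := by
          rw [Matrix.mul_assoc T Ad A, Matrix.mul_assoc T,
            h.isStarProjection_pinv_mul.isIdempotentElem.eq]

theorem mul_pinv_eq_conj_of_range_eq (h : IsMP A Ad) (hT : T = T * Tᴴ * T)
    (hA : A = A * Tᴴ * T)
    (hr : LinearMap.range A.mulVecLin = LinearMap.range (T * Aᴴ * T).mulVecLin) :
    A * Ad = T * (Ad * A) * Tᴴ := by
  obtain ⟨X, hX⟩ := (range_mulVecLin_le_iff_exists_mul _ _).1 hr.le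
  obtain ⟨Y, hY⟩ := (range_mulVecLin_le_iff_exists_mul _ _).1 hr.ge
  have hTA : Aᴴ * (T * Tᴴ) = Aᴴ := by
    suffices T * Tᴴ * A = A by simpa using congrArg conjTranspose this
    have : T * Tᴴ * (T * Aᴴ * T * X) = T * Aᴴ * T * X := by
      simp only [← Matrix.mul_assoc]
      rw [← hT]
    rwa [← hX] at this
  have hPTA : A * Ad * (T * Aᴴ) = T * Aᴴ :=
    calc A * Ad * (T * Aᴴ) = A * Ad * (T * Aᴴ * T) * Tᴴ := by
          conv_lhs => rw [← hTA]
          simp only [Matrix.mul_assoc]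
      _ = T * Aᴴ * T * Tᴴ := by rw [hY, ← Matrix.mul_assoc, h.1]
      _ = T * Aᴴ := by rw [Matrix.mul_assoc, Matrix.mul_assoc, hTA]
  refine h.mul_pinv_eq_conj_of_mul_eq hA ?_
  rw [← h.conjTranspose_mul_conjTranspose_pinv]
  calc A * Ad * (T * (Aᴴ * Adᴴ) * Tᴴ) = A * Ad * (T * Aᴴ) * Adᴴ * Tᴴ := by
        simp only [Matrix.mul_assoc]
    _ = T * (Aᴴ * Adᴴ) * Tᴴ := by rw [hPTA, Matrix.mul_assoc T]

theorem range_eq_of_mul_pinv_eq_conj (h : IsMP A Ad) (hc : T * Ad * A = A * Ad * T)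
    (hE : A * Ad = T * (Ad * A) * Tᴴ) :
    LinearMap.range A.mulVecLin = LinearMap.range (T * Aᴴ * T).mulVecLin := by
  refine le_antisymm ((range_mulVecLin_le_iff_exists_mul _ _).2
    ⟨Ad * A * Tᴴ * Adᴴ * Tᴴ * A, ?_⟩) ((range_mulVecLin_le_iff_exists_mul _ _).2
    ⟨Ad * T * Aᴴ * T, ?_⟩)
  · calc A = T * (Aᴴ * (A * Ad * Adᴴ)) * Tᴴ * A := by
          rw [h.mul_pinv_mul_conjTranspose_pinv, h.conjTranspose_mul_conjTranspose_pinv, ← hE,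
            h.1]
      _ = T * Aᴴ * T * (Ad * A * Tᴴ * Adᴴ * Tᴴ * A) := by
          rw [hE]; simp only [Matrix.mul_assoc]
  · calc T * Aᴴ * T = T * (Ad * A * Aᴴ) * T := by rw [h.pinv_mul_mul_conjTranspose]
      _ = T * Ad * A * Aᴴ * T := by simp only [Matrix.mul_assoc]
      _ = A * (Ad * T * Aᴴ * T) := by
          rw [hc]; simp only [Matrix.mul_assoc]

end IsMP

theorem stmt11 {m n : ℕ} (A T : Matrix (Fin m) (Fin n) ℂ)
    (Ad : Matrix (Fin n) (Fin m) ℂ) (hT : T = T * Tᴴ * T) (hMP : IsMP A Ad) :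
    IsTEP T A ↔ (T * Ad * A = A * Ad * T ∧ A = A * Tᴴ * T) := by
  constructor
  · rintro ⟨hr, hA⟩
    exact ⟨(hMP.mul_pinv_eq_conj_iff hA).1 (hMP.mul_pinv_eq_conj_of_range_eq hT hA hr), hA⟩
  · rintro ⟨hc, hA⟩
    exact ⟨hMP.range_eq_of_mul_pinv_eq_conj hc ((hMP.mul_pinv_eq_conj_iff hA).2 hc), hA⟩
end

section
/- Let T be an n×n orthogonal projector (T = T* = T²). Then A is T-EP if and only if A is EP and A = A T. -/
/-!
Since `T` is an orthogonal projector, `A Tᴴ T = A T`, and `A T = A` is equivalent to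
`T Aᴴ = Aᴴ`. On either side of the equivalence the range of `A` lies in the range of `T`:
for T-EP because `range (T Aᴴ T) ≤ range T`, for EP because `range Aᴴ = range (T Aᴴ) ≤ range T`.
Hence `T A = A` as well, so `T Aᴴ T = (T A T)ᴴ = Aᴴ` and the two range conditions coincide.
-/

open Matrix

namespace Matrix

theorem mul_eq_right_iff_range_mulVecLin_le {R m n : Type*} [CommSemiring R]
    [Fintype m] [Fintype n] [DecidableEq n] {T : Matrix m m R} (hT : IsIdempotentElem T)
    (M : Matrix m n R) :
    T * M = M ↔ LinearMap.range M.mulVecLin ≤ LinearMap.range T.mulVecLin := by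
  have hT' : IsIdempotentElem T.mulVecLin := by
    rw [IsIdempotentElem, Module.End.mul_eq_comp, ← mulVecLin_mul, hT.eq]
  rw [← LinearMap.IsIdempotentElem.comp_eq_right_iff hT', ← mulVecLin_mul,
    ← toLin'_apply', ← toLin'_apply', toLin'.injective.eq_iff]

variable {R n : Type*} [CommSemiring R] [StarRing R] [Fintype n] {T A : Matrix n n R}

theorem IsHermitian.mul_eq_self_iff_mul_conjTranspose_eq (hT : T.IsHermitian) :
    A * T = A ↔ T * Aᴴ = Aᴴ := by
  rw [← conjTranspose_inj, conjTranspose_mul, hT.eq]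

theorem IsHermitian.mul_conjTranspose_mul_eq (hT : T.IsHermitian) (hAT : A * T = A)
    (hTA : T * A = A) : T * Aᴴ * T = Aᴴ := by
  rw [← hT.eq, ← conjTranspose_mul, hAT, ← conjTranspose_mul, hTA]

end Matrix

theorem stmt16 {n : ℕ} (A T : Matrix (Fin n) (Fin n) ℂ)
    (hH : T = Tᴴ) (hIdem : T * T = T) :
    IsTEP T A ↔
      (LinearMap.range (Matrix.mulVecLin A) = LinearMap.range (Matrix.mulVecLin Aᴴ) ∧
        A = A * T) := by
  have hT : T.IsHermitian := hH.symm
  have hATT : A * Tᴴ * T = A * T := by rw [hT.eq, mul_assoc, hIdem]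
  have absorbs_iff_range_le (M : Matrix (Fin n) (Fin n) ℂ) :=
    mul_eq_right_iff_range_mulVecLin_le (T := T) hIdem M
  constructor
  · rintro ⟨hrange, hA⟩
    have hAT : A * T = A := by rw [← hATT, ← hA]
    have hTA : T * A = A := by
      rw [absorbs_iff_range_le, hrange, mul_assoc, mulVecLin_mul]
      exact LinearMap.range_comp_le_range _ _
    rw [hT.mul_conjTranspose_mul_eq hAT hTA] at hrange
    exact ⟨hrange, hAT.symm⟩
  · rintro ⟨hrange, hA⟩
    have hTAH : T * Aᴴ = Aᴴ := hT.mul_eq_self_iff_mul_conjTranspose_eq.mp hA.symm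
    have hTA : T * A = A := by rw [absorbs_iff_range_le, hrange, ← absorbs_iff_range_le, hTAH]
    exact ⟨by rw [hT.mul_conjTranspose_mul_eq hA.symm hTA, hrange], by rw [hATT, ← hA]⟩
end

section
/- Let T be an n×n normal partial isometry. If A = T T* A, then (T A)† = A† T*, and consequently A† = (T A)† T. -/
open Matrix

/-! If `U* U A = A`, then also `A† U* U = A†`, since `A† = A† A†* A*`. With these two identities
the four Penrose equations for `A`, `A†` carry over to `U A`, `A† U*`. Normality of `T` turns
`A = T T* A` into `T* T A = A`. -/

namespace IsMP

variable {k m n : ℕ} {A : Matrix (Fin m) (Fin n) ℂ} {X : Matrix (Fin n) (Fin m) ℂ}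

theorem eq_mul_conjTranspose_mul_conjTranspose (h : IsMP A X) : X = X * Xᴴ * Aᴴ := by
  obtain ⟨-, hXAX, hAX, -⟩ := h
  calc X = X * (A * X) := by rw [← Matrix.mul_assoc, hXAX]
    _ = X * (A * X)ᴴ := by rw [hAX]
    _ = X * Xᴴ * Aᴴ := by rw [conjTranspose_mul, Matrix.mul_assoc]

theorem mul_conjTranspose_of_mul_eq (h : IsMP A X) {P : Matrix (Fin m) (Fin m) ℂ}
    (hP : P * A = A) : X * Pᴴ = X := by
  have hAP : Aᴴ * Pᴴ = Aᴴ := by rw [← conjTranspose_mul, hP]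
  rw [h.eq_mul_conjTranspose_mul_conjTranspose, Matrix.mul_assoc _ Aᴴ, hAP]

theorem mul_conjTranspose_mul_of_conjTranspose_mul_mul {U : Matrix (Fin k) (Fin m) ℂ}
    (h : IsMP A X) (hU : Uᴴ * U * A = A) : X * Uᴴ * U = X := by
  simpa [Matrix.mul_assoc] using h.mul_conjTranspose_of_mul_eq hU

theorem mul_left {U : Matrix (Fin k) (Fin m) ℂ} (h : IsMP A X) (hU : Uᴴ * U * A = A) :
    IsMP (U * A) (X * Uᴴ) := by
  have hXUA : X * Uᴴ * (U * A) = X * A := by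
    rw [← Matrix.mul_assoc, h.mul_conjTranspose_mul_of_conjTranspose_mul_mul hU]
  obtain ⟨hAXA, hXAX, hAX, hXA⟩ := h
  refine ⟨?_, ?_, ?_, ?_⟩
  · calc U * A * (X * Uᴴ) * (U * A) = U * (A * X * (Uᴴ * U * A)) := by
          simp only [Matrix.mul_assoc]
      _ = U * A := by rw [hU, hAXA]
  · rw [hXUA, ← Matrix.mul_assoc, hXAX]
  · calc (U * A * (X * Uᴴ))ᴴ = U * (A * X)ᴴ * Uᴴ := by
          simp only [conjTranspose_mul, conjTranspose_conjTranspose, Matrix.mul_assoc]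
      _ = U * A * (X * Uᴴ) := by rw [hAX]; simp only [Matrix.mul_assoc]
  · rw [hXUA, hXA]

end IsMP

theorem stmt17_general {n : ℕ} (A T : Matrix (Fin n) (Fin n) ℂ)
    (Ad : Matrix (Fin n) (Fin n) ℂ) (hN : T * Tᴴ = Tᴴ * T)
    (hMP : IsMP A Ad) (hA : A = T * Tᴴ * A) :
    IsMP (T * A) (Ad * Tᴴ) ∧ Ad = Ad * Tᴴ * T := by
  have hTA : Tᴴ * T * A = A := by rw [← hN, ← hA]
  exact ⟨hMP.mul_left hTA, (hMP.mul_conjTranspose_mul_of_conjTranspose_mul_mul hTA).symm⟩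

theorem stmt17 {n : ℕ} (A T : Matrix (Fin n) (Fin n) ℂ)
    (Ad : Matrix (Fin n) (Fin n) ℂ) (hT : T = T * Tᴴ * T) (hN : T * Tᴴ = Tᴴ * T)
    (hMP : IsMP A Ad) (hA : A = T * Tᴴ * A) :
    IsMP (T * A) (Ad * Tᴴ) ∧ Ad = Ad * Tᴴ * T :=
  stmt17_general A T Ad hN hMP hA
end
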